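/- arXiv:2106.07231 — 4 statements merged into one kernel-verified Lean document; each statement's English description precedes it below -/
import Mathlib

section
/- For all integers n, m with n > m > 2, the groups G and H are not isomorphic. -/
/-!
Suppose `G ≅ H`. Then `G` maps onto the quotient `Model n 4` of `H`; let `A`, `B`, `C` be the
images of `x`, `y`, `z`. As `y ^ 2 ^ m = 1` with `m < n`, the `X`-exponent of `B` is even, so `B`
centralises `C = [B, A] ∈ ⟨Z⟩`. Since `y` inverts `z`, this forces `C = C⁻¹`, so `C` dies in the
Heisenberg group `Model 1 2`. There the images of `x` and `y` then commute, although they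
generate this non-abelian group.
-/

namespace MIP

/-- Relators of the group `G`. -/
def grels (n m : ℕ) : Set (FreeGroup (Fin 3)) :=
  {(FreeGroup.of 2)⁻¹ * ((FreeGroup.of 1)⁻¹ * (FreeGroup.of 0)⁻¹ * FreeGroup.of 1 * FreeGroup.of 0),
   FreeGroup.of 0 ^ (2 ^ n), FreeGroup.of 1 ^ (2 ^ m), FreeGroup.of 2 ^ 4,
   (FreeGroup.of 0)⁻¹ * FreeGroup.of 2 * FreeGroup.of 0 * FreeGroup.of 2,
   (FreeGroup.of 1)⁻¹ * FreeGroup.of 2 * FreeGroup.of 1 * FreeGroup.of 2}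

/-- Relators of the group `H`. -/
def hrels (n m : ℕ) : Set (FreeGroup (Fin 3)) :=
  {(FreeGroup.of 2)⁻¹ * ((FreeGroup.of 1)⁻¹ * (FreeGroup.of 0)⁻¹ * FreeGroup.of 1 * FreeGroup.of 0),
   FreeGroup.of 0 ^ (2 ^ n), FreeGroup.of 1 ^ (2 ^ m), FreeGroup.of 2 ^ 4,
   (FreeGroup.of 0)⁻¹ * FreeGroup.of 2 * FreeGroup.of 0 * FreeGroup.of 2,
   (FreeGroup.of 1)⁻¹ * FreeGroup.of 2 * FreeGroup.of 1 * (FreeGroup.of 2)⁻¹}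

abbrev GG (n m : ℕ) := PresentedGroup (grels n m)
abbrev HH (n m : ℕ) := PresentedGroup (hrels n m)

def gx (n m : ℕ) : GG n m := PresentedGroup.of 0
def gy (n m : ℕ) : GG n m := PresentedGroup.of 1
def gz (n m : ℕ) : GG n m := PresentedGroup.of 2
def ha (n m : ℕ) : HH n m := PresentedGroup.of 0
def hb (n m : ℕ) : HH n m := PresentedGroup.of 1
def hc (n m : ℕ) : HH n m := PresentedGroup.of 2

/-- `⟨a, b, c⟩` stands for `X ^ a * Y ^ b * Z ^ c`: the normal subgroup `⟨Y, Z⟩ ≅ (ZMod L)²` is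
abelian and `X` acts on it through the parity of its exponent, by the involution
`(b, c) ↦ (b, b - c)`. `Model 1 2` is the Heisenberg group over `𝔽₂`. -/
@[ext]
structure Model (n L : ℕ) where
  a : ZMod (2 ^ n)
  b : ZMod L
  c : ZMod L

namespace Model

variable {n L : ℕ}

instance : One (Model n L) := ⟨⟨0, 0, 0⟩⟩

@[simp] lemma one_a : (1 : Model n L).a = 0 := rfl
@[simp] lemma one_b : (1 : Model n L).b = 0 := rfl
@[simp] lemma one_c : (1 : Model n L).c = 0 := rfl

variable [NeZero n]

def parity : ZMod (2 ^ n) →+* ZMod 2 := ZMod.castHom (dvd_pow_self 2 (NeZero.ne n)) _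

def twist (t : ZMod 2) (b c : ZMod L) : ZMod L := if t = 0 then c else b - c

lemma zmod_two_eq_zero_or_one : ∀ t : ZMod 2, t = 0 ∨ t = 1 := by decide

instance : Mul (Model n L) :=
  ⟨fun g h => ⟨g.a + h.a, g.b + h.b, twist (parity h.a) g.b g.c + h.c⟩⟩
instance : Inv (Model n L) := ⟨fun g => ⟨-g.a, -g.b, -twist (parity g.a) g.b g.c⟩⟩

@[simp] lemma mul_a (g h : Model n L) : (g * h).a = g.a + h.a := rfl
@[simp] lemma mul_b (g h : Model n L) : (g * h).b = g.b + h.b := rfl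
@[simp] lemma mul_c (g h : Model n L) : (g * h).c = twist (parity h.a) g.b g.c + h.c := rfl
@[simp] lemma inv_a (g : Model n L) : g⁻¹.a = -g.a := rfl
@[simp] lemma inv_b (g : Model n L) : g⁻¹.b = -g.b := rfl
@[simp] lemma inv_c (g : Model n L) : g⁻¹.c = -twist (parity g.a) g.b g.c := rfl

instance : Group (Model n L) where
  mul_assoc g h k := by
    ext
    · exact add_assoc _ _ _
    · exact add_assoc _ _ _
    · simp only [mul_c, mul_a, mul_b, map_add]
      rcases zmod_two_eq_zero_or_one (parity h.a) with hh | hh <;>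
        rcases zmod_two_eq_zero_or_one (parity k.a) with hk | hk <;>
        simp [hh, hk, twist, show (1 : ZMod 2) + 1 = 0 from rfl] <;> ring
  one_mul g := by ext <;> simp [twist]
  mul_one g := by ext <;> simp [twist]
  inv_mul_cancel g := by
    ext
    · exact neg_add_cancel _
    · exact neg_add_cancel _
    · rcases zmod_two_eq_zero_or_one (parity g.a) with hg | hg <;> simp [hg, twist]; ring

@[simp] lemma parity_natCast (k : ℕ) : parity (k : ZMod (2 ^ n)) = k := map_natCast _ k

def X : Model n L := ⟨1, 0, 0⟩
def Y : Model n L := ⟨0, 1, 0⟩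
def Z : Model n L := ⟨0, 0, 1⟩

lemma X_pow (k : ℕ) : (X : Model n L) ^ k = ⟨k, 0, 0⟩ := by
  induction k with
  | zero => ext <;> simp
  | succ k ih => rw [pow_succ, ih]; ext <;> simp [X, twist]

lemma Y_pow (k : ℕ) : (Y : Model n L) ^ k = ⟨0, k, 0⟩ := by
  induction k with
  | zero => ext <;> simp
  | succ k ih => rw [pow_succ, ih]; ext <;> simp [Y, twist]

lemma Z_pow (k : ℕ) : (Z : Model n L) ^ k = ⟨0, 0, k⟩ := by
  induction k with
  | zero => ext <;> simp
  | succ k ih => rw [pow_succ, ih]; ext <;> simp [Z, twist]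

lemma eq_X_pow_mul_Y_pow_mul_Z_pow [NeZero L] (g : Model n L) :
    g = X ^ g.a.val * Y ^ g.b.val * Z ^ g.c.val := by
  ext <;> simp [X_pow, Y_pow, Z_pow, twist]

lemma X_mul_Y_ne_Y_mul_X [Nontrivial (ZMod L)] : (X : Model n L) * Y ≠ Y * X := by
  intro h
  simpa [X, Y, twist] using congrArg Model.c h

lemma pow_a (g : Model n L) (k : ℕ) : (g ^ k).a = k * g.a := by
  induction k with
  | zero => simp
  | succ k ih => rw [pow_succ, mul_a, ih]; push_cast; ring

lemma parity_eq_zero_of_pow_eq_one {k : ℕ} (hk : k < n) {g : Model n L} (hg : g ^ 2 ^ k = 1) :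
    parity g.a = 0 := by
  have hdvd := congrArg Model.a hg
  rw [pow_a, one_a, ← ZMod.natCast_zmod_val g.a, ← Nat.cast_mul, ZMod.natCast_eq_zero_iff] at hdvd
  by_contra hodd
  rw [← ZMod.natCast_zmod_val g.a, parity_natCast, ZMod.natCast_eq_zero_iff] at hodd
  have hcop : Nat.Coprime (2 ^ n) g.a.val :=
    ((Nat.Prime.coprime_iff_not_dvd Nat.prime_two).mpr hodd).pow_left n
  have := (Nat.pow_dvd_pow_iff_le_right one_lt_two).mp (hcop.dvd_of_dvd_mul_right hdvd)
  omega

lemma map_twist {L' : ℕ} (f : ZMod L →+* ZMod L') (t : ZMod 2) (b c : ZMod L) :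
    f (twist t b c) = twist t (f b) (f c) := by
  unfold twist; split_ifs <;> simp

def reduce {n' L' : ℕ} [NeZero n'] (hn : n' ≤ n) (hL : L' ∣ L) : Model n L →* Model n' L' where
  toFun g := ⟨ZMod.castHom (pow_dvd_pow 2 hn) _ g.a, ZMod.castHom hL _ g.b, ZMod.castHom hL _ g.c⟩
  map_one' := by ext <;> simp
  map_mul' g h := by
    have hpar : parity (ZMod.castHom (pow_dvd_pow 2 hn) _ h.a) = parity h.a :=
      RingHom.congr_fun (RingHom.ext_zmod (parity.comp _) parity) h.a
    ext
    · exact map_add _ _ _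
    · exact map_add _ _ _
    · simp only [mul_c, map_add, map_twist, hpar]

variable {n' L' : ℕ} [NeZero n']

lemma reduce_apply (hn : n' ≤ n) (hL : L' ∣ L) (g : Model n L) :
    reduce hn hL g =
      ⟨ZMod.castHom (pow_dvd_pow 2 hn) _ g.a, ZMod.castHom hL _ g.b, ZMod.castHom hL _ g.c⟩ :=
  rfl

lemma reduce_surjective (hn : n' ≤ n) (hL : L' ∣ L) :
    Function.Surjective (reduce hn hL : Model n L →* Model n' L') := by
  intro g
  obtain ⟨a, ha⟩ := ZMod.castHom_surjective (pow_dvd_pow 2 hn) g.a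
  obtain ⟨b, hb⟩ := ZMod.castHom_surjective hL g.b
  obtain ⟨c, hc⟩ := ZMod.castHom_surjective hL g.c
  exact ⟨⟨a, b, c⟩, Model.ext ha hb hc⟩

lemma commute_mk_zero_zero {g : Model n L} (hg : parity g.a = 0) (c : ZMod L) :
    Commute g ⟨0, 0, c⟩ := by
  ext <;> simp [hg, twist, add_comm]

lemma inv_mul_inv_mul_mul_eq_mk (A B : Model n L) :
    B⁻¹ * A⁻¹ * B * A = ⟨0, 0, (B⁻¹ * A⁻¹ * B * A).c⟩ := by
  ext <;> simp

lemma reduce_eq_one_of_conj_eq_inv (hn : n' ≤ n) {A B C : Model n 4}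
    (hC : C = B⁻¹ * A⁻¹ * B * A) (hB : parity B.a = 0) (hconj : B⁻¹ * C * B = C⁻¹) :
    reduce hn (by norm_num : 2 ∣ 4) C = 1 := by
  obtain ⟨c, rfl⟩ : ∃ c, C = ⟨0, 0, c⟩ := ⟨C.c, by rw [hC]; exact inv_mul_inv_mul_mul_eq_mk A B⟩
  rw [mul_assoc, ← (commute_mk_zero_zero hB c).eq, inv_mul_cancel_left] at hconj
  have hneg : c = -c := by simpa [twist] using congrArg Model.c hconj
  have hmod2 : ∀ c : ZMod 4, c = -c → ZMod.castHom (by norm_num : 2 ∣ 4) (ZMod 2) c = 0 := by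
    decide
  rw [reduce_apply]
  ext
  · exact map_zero _
  · exact map_zero _
  · exact hmod2 c hneg

end Model

theorem commute_of_surjective_of_closure_eq_top {P Q : Type*} [Group P] [Group Q] {f : P →* Q}
    (hf : Function.Surjective f) {s : Set P} (hs : Subgroup.closure s = ⊤)
    (hcomm : ∀ x ∈ s, ∀ y ∈ s, Commute (f x) (f y)) (u v : Q) : Commute u v := by
  have hgen : Subgroup.closure (f '' s) = ⊤ := by
    rw [← MonoidHom.map_closure, hs, ← MonoidHom.range_eq_map, MonoidHom.range_eq_top]
    exact hf
  have hle := Subgroup.closure_le_centralizer_centralizer (f '' s)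
  rw [hgen] at hle
  refine Set.centralizer_centralizer_comm_of_comm ?_ u (hle trivial) v (hle trivial)
  rintro _ ⟨x, hx, rfl⟩ _ ⟨y, hy, rfl⟩
  exact hcomm x hx y hy

section Relations

variable {n m : ℕ}

lemma gz_eq : gz n m = (gy n m)⁻¹ * (gx n m)⁻¹ * gy n m * gx n m := by
  have := PresentedGroup.mk_eq_mk_of_inv_mul_mem (rels := grels n m) (Set.mem_insert _ _)
  rwa [map_mul, map_mul, map_mul, map_inv, map_inv] at this

lemma gy_pow : gy n m ^ 2 ^ m = 1 := by
  have := PresentedGroup.one_of_mem (rels := grels n m) (x := FreeGroup.of 1 ^ 2 ^ m)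
    (by simp [grels])
  rwa [map_pow] at this

lemma gy_inv_mul_gz_mul_gy : (gy n m)⁻¹ * gz n m * gy n m = (gz n m)⁻¹ := by
  have := PresentedGroup.one_of_mem (rels := grels n m)
    (x := (FreeGroup.of 1)⁻¹ * FreeGroup.of 2 * FreeGroup.of 1 * FreeGroup.of 2) (by simp [grels])
  rw [map_mul, map_mul, map_mul, map_inv] at this
  exact mul_eq_one_iff_eq_inv.mp this

lemma commute_of_surjective_of_map_gz_eq_one {Q : Type*} [Group Q] {f : GG n m →* Q}
    (hf : Function.Surjective f) (hz : f (gz n m) = 1) (u v : Q) : Commute u v := by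
  have hxy : Commute (f (gy n m)) (f (gx n m)) := by
    rw [← inv_inv (f (gy n m)), ← inv_inv (f (gx n m))]
    refine (commutatorElement_eq_one_iff_commute.mp ?_).inv_inv
    rw [commutatorElement_def, ← hz, gz_eq]
    simp
  have hzc : ∀ u, Commute u (f (gz n m)) := fun u => hz ▸ Commute.one_right u
  refine commute_of_surjective_of_closure_eq_top hf (PresentedGroup.closure_range_of _) ?_ u v
  rintro _ ⟨i, rfl⟩ _ ⟨j, rfl⟩
  fin_cases i <;> fin_cases j
  exacts [.refl _, hxy.symm, hzc _, hxy, .refl _, hzc _, (hzc _).symm, (hzc _).symm, .refl _]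

lemma parity_map_gy_a_eq_zero {n' L : ℕ} [NeZero n'] (hmn : m < n') (ψ : GG n m →* Model n' L) :
    Model.parity (ψ (gy n m)).a = 0 :=
  Model.parity_eq_zero_of_pow_eq_one hmn (by rw [← map_pow, gy_pow, map_one])

end Relations

section ToModel

variable {n m : ℕ} [NeZero n]

def modelGen : Fin 3 → Model n 4 := ![Model.X, Model.Y, Model.Z]

lemma lift_modelGen_eq_one (hm : 2 ≤ m) : ∀ r ∈ hrels n m, FreeGroup.lift (modelGen (n := n)) r = 1 := by
  intro r hr
  simp only [hrels, Set.mem_insert_iff, Set.mem_singleton_iff] at hr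
  rcases hr with rfl | rfl | rfl | rfl | rfl | rfl <;>
    simp only [map_mul, map_inv, map_pow, FreeGroup.lift_apply_of, modelGen, Matrix.cons_val]
  · ext <;> simp [Model.X, Model.Y, Model.Z, Model.twist]
  · rw [Model.X_pow, ZMod.natCast_self]; rfl
  · rw [Model.Y_pow, (ZMod.natCast_eq_zero_iff _ 4).mpr (pow_dvd_pow 2 hm)]; rfl
  · rw [Model.Z_pow, ZMod.natCast_self]; rfl
  · ext <;> simp [Model.X, Model.Z, Model.twist]
  · ext <;> simp [Model.Y, Model.Z, Model.twist]

def toModel (hm : 2 ≤ m) : HH n m →* Model n 4 := PresentedGroup.toGroup (lift_modelGen_eq_one hm)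

lemma toModel_surjective (hm : 2 ≤ m) : Function.Surjective (toModel (n := n) hm) := by
  intro g
  refine ⟨ha n m ^ g.a.val * hb n m ^ g.b.val * hc n m ^ g.c.val, ?_⟩
  simp only [map_mul, map_pow, toModel, ha, hb, hc, PresentedGroup.toGroup.of]
  exact (Model.eq_X_pow_mul_Y_pow_mul_Z_pow g).symm

end ToModel

/-- For all integers `n, m` with `n > m > 2`, the groups `G` and `H`
are not isomorphic. -/
theorem statement_1 (n m : ℕ) (hm : 2 < m) (hmn : m < n) :
    IsEmpty (GG n m ≃* HH n m) := by
  refine ⟨fun e => ?_⟩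
  have : NeZero n := ⟨by omega⟩
  have hn : 1 ≤ n := by omega
  let ψ : GG n m →* Model n 4 := (toModel hm.le).comp e.toMonoidHom
  let θ : GG n m →* Model 1 2 := (Model.reduce hn (by norm_num)).comp ψ
  have hθ : Function.Surjective θ := by
    simp only [θ, ψ, MonoidHom.coe_comp, MulEquiv.coe_toMonoidHom]
    exact (Model.reduce_surjective _ _).comp ((toModel_surjective hm.le).comp e.surjective)
  have hz : θ (gz n m) = 1 :=
    Model.reduce_eq_one_of_conj_eq_inv hn (A := ψ (gx n m))
      (by simp only [gz_eq, map_mul, map_inv]) (parity_map_gy_a_eq_zero hmn ψ)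
      (by simpa only [map_mul, map_inv] using congrArg ψ gy_inv_mul_gz_mul_gy)
  exact Model.X_mul_Y_ne_Y_mul_X (commute_of_surjective_of_map_gz_eq_one hθ hz _ _).eq

end MIP
end

section
/- The derived subgroup H' of H is the cyclic subgroup generated by c, and it has order 4. -/
/-! Conjugation by `a` and `b` sends `c` to `c⁻¹` and `c`, so `⟨c⟩` is normal. Modulo `⟨c⟩` the
generators commute, hence `H' ≤ ⟨c⟩`, and `c = [b, a]` gives equality. Finally `c⁴ = 1`, and
`a ↦ s`, `b ↦ r` defines a homomorphism to the dihedral group of order 16 sending `c` to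
`r⁻²`, which has order 4. -/

open scoped commutatorElement

namespace Subgroup

variable {G : Type*} [Group G]

theorem mem_normalizer_zpowers_iff {g c : G} :
    g ∈ normalizer (zpowers c) ↔ zpowers (g * c * g⁻¹) = zpowers c := by
  rw [mem_normalizer_iff_map_conj_eq, MonoidHom.map_zpowers]
  rfl

theorem normal_of_subset_normalizer {S : Set G} (hS : closure S = ⊤) {H : Subgroup G}
    (h : ∀ g ∈ S, g ∈ normalizer (H : Set G)) : H.Normal :=
  normalizer_eq_top_iff.mp (top_le_iff.mp (hS ▸ (closure_le _).mpr h))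

theorem commutator_le_ker_of_commute {Q : Type*} [Group Q] (f : G →* Q) {S : Set G}
    (hS : closure S = ⊤) (h : ∀ x ∈ S, ∀ y ∈ S, Commute (f x) (f y)) :
    _root_.commutator G ≤ f.ker := by
  have hcomm : ∀ u ∈ f '' S, ∀ v ∈ f '' S, u * v = v * u := by
    rintro _ ⟨x, hx, rfl⟩ _ ⟨y, hy, rfl⟩
    exact h x hx y hy
  have hrange : ∀ g, f g ∈ Set.centralizer (Set.centralizer (f '' S)) := fun g ↦
    closure_le_centralizer_centralizer (f '' S) <| by
      rw [← MonoidHom.map_closure, hS]; exact mem_map_of_mem f (mem_top g)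
  rw [_root_.commutator_def, commutator_le]
  intro g _ g' _
  rw [MonoidHom.mem_ker, map_commutatorElement, commutatorElement_eq_one_iff_mul_comm]
  exact Set.centralizer_centralizer_comm_of_comm hcomm _ (hrange g) _ (hrange g')

end Subgroup

namespace MIP

open Subgroup

variable {n m : ℕ}

theorem hc_eq_commutatorElement : hc n m = ⁅(hb n m)⁻¹, (ha n m)⁻¹⁆ := by
  have h := PresentedGroup.one_of_mem (rels := hrels n m) (Set.mem_insert _ _)
  simp only [map_mul, map_inv] at h
  rw [commutatorElement_def, inv_inv, inv_inv, ← inv_mul_eq_one]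
  exact h

theorem hc_pow_four : hc n m ^ 4 = 1 := by
  have h := PresentedGroup.one_of_mem (rels := hrels n m) (x := FreeGroup.of 2 ^ 4)
    (by simp [hrels])
  rw [map_pow] at h
  exact h

theorem ha_conj_hc : ha n m * hc n m * (ha n m)⁻¹ = (hc n m)⁻¹ := by
  have h := PresentedGroup.one_of_mem (rels := hrels n m)
    (x := (FreeGroup.of 0)⁻¹ * FreeGroup.of 2 * FreeGroup.of 0 * FreeGroup.of 2)
    (by simp [hrels])
  simp only [map_mul, map_inv] at h
  change (ha n m)⁻¹ * hc n m * ha n m * hc n m = 1 at h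
  calc ha n m * hc n m * (ha n m)⁻¹
      = ha n m * ((ha n m)⁻¹ * hc n m * ha n m)⁻¹ * (ha n m)⁻¹ := by
        rw [mul_eq_one_iff_eq_inv.mp h, inv_inv]
    _ = (hc n m)⁻¹ := by group

theorem hb_conj_hc : hb n m * hc n m * (hb n m)⁻¹ = hc n m := by
  have h := PresentedGroup.one_of_mem (rels := hrels n m)
    (x := (FreeGroup.of 1)⁻¹ * FreeGroup.of 2 * FreeGroup.of 1 * (FreeGroup.of 2)⁻¹)
    (by simp [hrels])
  simp only [map_mul, map_inv] at h
  change (hb n m)⁻¹ * hc n m * hb n m * (hc n m)⁻¹ = 1 at h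
  calc hb n m * hc n m * (hb n m)⁻¹
      = hb n m * ((hb n m)⁻¹ * hc n m * hb n m) * (hb n m)⁻¹ := by
        rw [mul_inv_eq_one.mp h]
    _ = hc n m := by group

theorem closure_ha_hb_hc : closure {ha n m, hb n m, hc n m} = ⊤ := by
  rw [← PresentedGroup.closure_range_of]
  congr
  ext x
  simp [Fin.exists_fin_succ, ha, hb, hc, eq_comm]

theorem zpowers_hc_normal : (zpowers (hc n m)).Normal := by
  refine normal_of_subset_normalizer closure_ha_hb_hc ?_
  simp only [Set.mem_insert_iff, Set.mem_singleton_iff, forall_eq_or_imp, forall_eq,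
    mem_normalizer_zpowers_iff]
  refine ⟨?_, ?_, ?_⟩
  · exact (congrArg zpowers ha_conj_hc).trans zpowers_inv
  · exact congrArg zpowers hb_conj_hc
  · exact congrArg zpowers (mul_inv_cancel_right _ _)

theorem zpowers_hc_le_commutator : zpowers (hc n m) ≤ commutator (HH n m) := by
  rw [zpowers_le, hc_eq_commutatorElement, commutator_def]
  exact commutator_mem_commutator (mem_top _) (mem_top _)

theorem commutator_le_zpowers_hc : commutator (HH n m) ≤ zpowers (hc n m) := by
  have : (zpowers (hc n m)).Normal := zpowers_hc_normal
  let π := QuotientGroup.mk' (zpowers (hc n m))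
  have hπc : π (hc n m) = 1 := (QuotientGroup.eq_one_iff _).mpr (mem_zpowers _)
  have hπba : Commute (π (hb n m)) (π (ha n m)) := by
    rw [← Commute.inv_inv_iff, ← map_inv, ← map_inv, ← commutatorElement_eq_one_iff_commute,
      ← map_commutatorElement, ← hc_eq_commutatorElement, hπc]
  rw [← QuotientGroup.ker_mk' (zpowers (hc n m))]
  refine commutator_le_ker_of_commute π closure_ha_hb_hc ?_
  simp only [Set.mem_insert_iff, Set.mem_singleton_iff, forall_eq_or_imp, forall_eq, hπc,
    Commute.one_left, Commute.one_right, Commute.refl, hπba, hπba.symm, and_self]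

open DihedralGroup

-- `DihedralGroup 8` has order 16.
def toDihedral : Fin 3 → DihedralGroup 8 := ![sr 0, r 1, r (-2)]

theorem lift_toDihedral_eq_one (hn : 1 ≤ n) (hm : 3 ≤ m) :
    ∀ w ∈ hrels n m, FreeGroup.lift toDihedral w = 1 := by
  simp only [hrels, Set.mem_insert_iff, Set.mem_singleton_iff, forall_eq_or_imp, forall_eq,
    map_mul, map_inv, map_pow, FreeGroup.lift_apply_of]
  refine ⟨by decide, ?_, ?_, by decide, by decide, by decide⟩
  · rw [← orderOf_dvd_iff_pow_eq_one, show toDihedral 0 = sr 0 from rfl, orderOf_sr]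
    exact dvd_pow_self 2 (by omega)
  · rw [← orderOf_dvd_iff_pow_eq_one, show toDihedral 1 = r 1 from rfl, orderOf_r_one]
    exact pow_dvd_pow 2 hm

theorem orderOf_hc (hn : 1 ≤ n) (hm : 3 ≤ m) : orderOf (hc n m) = 4 := by
  refine Nat.dvd_antisymm (orderOf_dvd_of_pow_eq_one hc_pow_four) ?_
  have h := orderOf_map_dvd (PresentedGroup.toGroup (lift_toDihedral_eq_one hn hm)) (hc n m)
  rw [hc, PresentedGroup.toGroup.of] at h
  rwa [show toDihedral 2 = r (-2) from rfl, orderOf_r] at h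

/-- The derived subgroup `H'` of `H` is the cyclic subgroup generated by
`c`, and it has order 4. -/
theorem statement_4 (n m : ℕ) (hm : 2 < m) (hmn : m < n) :
    commutator (HH n m) = Subgroup.zpowers (hc n m) ∧
    Nat.card (commutator (HH n m)) = 4 := by
  have h : commutator (HH n m) = zpowers (hc n m) :=
    le_antisymm commutator_le_zpowers_hc zpowers_hc_le_commutator
  refine ⟨h, ?_⟩
  rw [h, Nat.card_zpowers, orderOf_hc (by omega) hm]

end MIP
end

section
/- In G the element x² lies in the center Z(G), and in H the element a² lies in the center Z(H). -/
namespace MIP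

/-! The relation `z = [y, x]` reads `y ^ x = y z`, so `y ^ (x²) = (y z) ^ x = y z z⁻¹ = y`, and
`z ^ (x²) = (z⁻¹) ^ x = z`. Hence `x²` commutes with every generator and is central. Both relations
used are common to `G` and `H`. -/

theorem commute_sq_of_conj_conj_eq {G : Type*} [Group G] {x w : G}
    (h : x⁻¹ * (x⁻¹ * w * x) * x = w) : Commute (x ^ 2) w :=
  calc x ^ 2 * w = x ^ 2 * (x⁻¹ * (x⁻¹ * w * x) * x) := by rw [h]
    _ = w * x ^ 2 := by rw [sq]; group

theorem commute_sq_of_conj_eq_inv {G : Type*} [Group G] {x z : G} (hz : x⁻¹ * z * x = z⁻¹) :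
    Commute (x ^ 2) z :=
  commute_sq_of_conj_conj_eq <| by
    rw [hz, show x⁻¹ * z⁻¹ * x = (x⁻¹ * z * x)⁻¹ by group, hz, inv_inv]

theorem commute_sq_of_conj_eq_mul {G : Type*} [Group G] {x y z : G}
    (hy : x⁻¹ * y * x = y * z) (hz : x⁻¹ * z * x = z⁻¹) : Commute (x ^ 2) y :=
  commute_sq_of_conj_conj_eq <|
    calc x⁻¹ * (x⁻¹ * y * x) * x = x⁻¹ * (y * z) * x := by rw [hy]
      _ = (x⁻¹ * y * x) * (x⁻¹ * z * x) := by group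
      _ = y := by rw [hy, hz]; group

theorem PresentedGroup.mem_center_of_forall_commute_of {α : Type*} {rels : Set (FreeGroup α)}
    {g : PresentedGroup rels} (h : ∀ i, Commute g (PresentedGroup.of i)) :
    g ∈ Subgroup.center (PresentedGroup rels) := by
  refine Subgroup.mem_center_iff.mpr fun k => ?_
  have hk : k ∈ Subgroup.centralizer {g} :=
    PresentedGroup.generated_by rels _
      (fun i => Subgroup.mem_centralizer_singleton_iff.mpr (h i).symm) k
  exact Subgroup.mem_centralizer_singleton_iff.mp hk

/-- With `x, y, z` the generators `of 0, of 1, of 2`, the two relators say `z = [y, x]` and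
`z ^ x = z⁻¹`. -/
theorem PresentedGroup.of_zero_sq_mem_center {rels : Set (FreeGroup (Fin 3))}
    (hcomm : (FreeGroup.of 2)⁻¹ *
      ((FreeGroup.of 1)⁻¹ * (FreeGroup.of 0)⁻¹ * FreeGroup.of 1 * FreeGroup.of 0) ∈ rels)
    (hinv : (FreeGroup.of 0)⁻¹ * FreeGroup.of 2 * FreeGroup.of 0 * FreeGroup.of 2 ∈ rels) :
    (PresentedGroup.of 0 : PresentedGroup rels) ^ 2 ∈ Subgroup.center (PresentedGroup rels) := by
  set x : PresentedGroup rels := PresentedGroup.of 0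
  set y : PresentedGroup rels := PresentedGroup.of 1
  set z : PresentedGroup rels := PresentedGroup.of 2
  have hz : x⁻¹ * z * x = z⁻¹ :=
    mul_eq_one_iff_eq_inv.mp (PresentedGroup.one_of_mem hinv : x⁻¹ * z * x * z = 1)
  have hy : x⁻¹ * y * x = y * z := by
    have hzyx : z = y⁻¹ * x⁻¹ * y * x :=
      inv_mul_eq_one.mp (PresentedGroup.one_of_mem hcomm : z⁻¹ * (y⁻¹ * x⁻¹ * y * x) = 1)
    rw [hzyx]; group
  refine PresentedGroup.mem_center_of_forall_commute_of fun i => ?_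
  fin_cases i
  · exact (Commute.refl x).pow_left 2
  · exact commute_sq_of_conj_eq_mul hy hz
  · exact commute_sq_of_conj_eq_inv hz

theorem statement_5_general (n m : ℕ) :
    gx n m ^ 2 ∈ Subgroup.center (GG n m) ∧
    ha n m ^ 2 ∈ Subgroup.center (HH n m) :=
  ⟨PresentedGroup.of_zero_sq_mem_center (by simp [grels]) (by simp [grels]),
    PresentedGroup.of_zero_sq_mem_center (by simp [hrels]) (by simp [hrels])⟩

/-- In `G` the element `x²` lies in the center `Z(G)`, and in `H` the
element `a²` lies in the center `Z(H)`. -/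
theorem statement_5 (n m : ℕ) (hm : 2 < m) (hmn : m < n) :
    gx n m ^ 2 ∈ Subgroup.center (GG n m) ∧
    ha n m ^ 2 ∈ Subgroup.center (HH n m) :=
  statement_5_general n m

end MIP
end

section
/- In H, the element b²c lies in the center Z(H), and the conjugacy class of b in H is exactly {b, bc}. -/
namespace MIP

lemma relH (n m : ℕ) {r : FreeGroup (Fin 3)} (h : r ∈ hrels n m) :
    PresentedGroup.mk (hrels n m) r = 1 :=
  (QuotientGroup.eq_one_iff r).2 (Subgroup.subset_normalClosure h)

lemma hrel1 (n m : ℕ) :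
    (hc n m)⁻¹ * ((hb n m)⁻¹ * (ha n m)⁻¹ * hb n m * ha n m) = 1 := by
  have h := relH n m (r := (FreeGroup.of 2)⁻¹ * ((FreeGroup.of 1)⁻¹ * (FreeGroup.of 0)⁻¹ *
    FreeGroup.of 1 * FreeGroup.of 0)) (by simp [hrels])
  simpa only [ha, hb, hc, PresentedGroup.of, map_mul, map_inv] using h

lemma hrel5 (n m : ℕ) :
    (ha n m)⁻¹ * hc n m * ha n m * hc n m = 1 := by
  have h := relH n m (r := (FreeGroup.of 0)⁻¹ * FreeGroup.of 2 * FreeGroup.of 0 * FreeGroup.of 2)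
    (by simp [hrels])
  simpa only [ha, hb, hc, PresentedGroup.of, map_mul, map_inv] using h

lemma hrel6 (n m : ℕ) :
    (hb n m)⁻¹ * hc n m * hb n m * (hc n m)⁻¹ = 1 := by
  have h := relH n m (r := (FreeGroup.of 1)⁻¹ * FreeGroup.of 2 * FreeGroup.of 1 *
    (FreeGroup.of 2)⁻¹) (by simp [hrels])
  simpa only [ha, hb, hc, PresentedGroup.of, map_mul, map_inv] using h

/-- `c` and `b` commute. -/
lemma e_cb (n m : ℕ) : hc n m * hb n m = hb n m * hc n m := by
  calc hc n m * hb n m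
      = hb n m * ((hb n m)⁻¹ * hc n m * hb n m * (hc n m)⁻¹) * hc n m := by group
    _ = hb n m * hc n m := by rw [hrel6]; group

/-- `a⁻¹ c a = c⁻¹`. -/
lemma e_ainv_c (n m : ℕ) : (ha n m)⁻¹ * hc n m * ha n m = (hc n m)⁻¹ := by
  calc (ha n m)⁻¹ * hc n m * ha n m
      = ((ha n m)⁻¹ * hc n m * ha n m * hc n m) * (hc n m)⁻¹ := by group
    _ = (hc n m)⁻¹ := by rw [hrel5]; group

/-- `a c⁻¹ a⁻¹ = c`. -/
lemma e_ac_inv (n m : ℕ) : ha n m * (hc n m)⁻¹ * (ha n m)⁻¹ = hc n m := by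
  conv_lhs => rw [← e_ainv_c]
  group

/-- `a c a⁻¹ = c⁻¹`. -/
lemma e_ac (n m : ℕ) : ha n m * hc n m * (ha n m)⁻¹ = (hc n m)⁻¹ := by
  calc ha n m * hc n m * (ha n m)⁻¹ = (ha n m * (hc n m)⁻¹ * (ha n m)⁻¹)⁻¹ := by group
    _ = (hc n m)⁻¹ := by rw [e_ac_inv]

/-- `a⁻¹ b a = b c`. -/
lemma e_ainv_b (n m : ℕ) : (ha n m)⁻¹ * hb n m * ha n m = hb n m * hc n m := by
  calc (ha n m)⁻¹ * hb n m * ha n m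
      = (hb n m * hc n m) * ((hc n m)⁻¹ * ((hb n m)⁻¹ * (ha n m)⁻¹ * hb n m * ha n m)) := by group
    _ = hb n m * hc n m := by rw [hrel1]; group

/-- `a b a⁻¹ = b c`. -/
lemma e_aba (n m : ℕ) : ha n m * hb n m * (ha n m)⁻¹ = hb n m * hc n m := by
  calc ha n m * hb n m * (ha n m)⁻¹
      = ha n m * (hb n m * hc n m) * (ha n m)⁻¹ * (ha n m * (hc n m)⁻¹ * (ha n m)⁻¹) := by group
    _ = hb n m * hc n m := by
        conv_lhs => rw [← e_ainv_b, e_ac_inv]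
        group

/-- `a (b c) a⁻¹ = b`. -/
lemma e_abc (n m : ℕ) : ha n m * (hb n m * hc n m) * (ha n m)⁻¹ = hb n m := by
  calc ha n m * (hb n m * hc n m) * (ha n m)⁻¹
      = (ha n m * hb n m * (ha n m)⁻¹) * (ha n m * hc n m * (ha n m)⁻¹) := by group
    _ = (hb n m * hc n m) * (hc n m)⁻¹ := by rw [e_aba, e_ac]
    _ = hb n m := by group

/-- The subgroup of elements whose conjugation action permutes `{b, bc}`. -/
def KS (n m : ℕ) : Subgroup (HH n m) where
  carrier := {g | (g * hb n m * g⁻¹ = hb n m ∧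
                    g * (hb n m * hc n m) * g⁻¹ = hb n m * hc n m)
      ∨ (g * hb n m * g⁻¹ = hb n m * hc n m ∧
          g * (hb n m * hc n m) * g⁻¹ = hb n m)}
  one_mem' := by left; constructor <;> group
  mul_mem' := by
    intro g h hg hh
    have key : ∀ x : HH n m, (g * h) * x * (g * h)⁻¹ = g * (h * x * h⁻¹) * g⁻¹ :=
      fun x => by group
    rcases hg with ⟨hg1, hg2⟩ | ⟨hg1, hg2⟩ <;> rcases hh with ⟨hh1, hh2⟩ | ⟨hh1, hh2⟩
    · exact Or.inl ⟨by rw [key, hh1]; exact hg1, by rw [key, hh2]; exact hg2⟩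
    · exact Or.inr ⟨by rw [key, hh1]; exact hg2, by rw [key, hh2]; exact hg1⟩
    · exact Or.inr ⟨by rw [key, hh1]; exact hg1, by rw [key, hh2]; exact hg2⟩
    · exact Or.inl ⟨by rw [key, hh1]; exact hg2, by rw [key, hh2]; exact hg1⟩
  inv_mem' := by
    intro g hg
    have key : ∀ x y : HH n m, g * x * g⁻¹ = y → g⁻¹ * y * (g⁻¹)⁻¹ = x := by
      intro x y h; rw [← h]; group
    rcases hg with ⟨hg1, hg2⟩ | ⟨hg1, hg2⟩
    · exact Or.inl ⟨key _ _ hg1, key _ _ hg2⟩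
    · exact Or.inr ⟨key _ _ hg2, key _ _ hg1⟩

/-- trivial: `b b b⁻¹ = b` -/
lemma e_bb (n m : ℕ) : hb n m * hb n m * (hb n m)⁻¹ = hb n m := by group

lemma e_bbc (n m : ℕ) : hb n m * (hb n m * hc n m) * (hb n m)⁻¹ = hb n m * hc n m := by
  calc hb n m * (hb n m * hc n m) * (hb n m)⁻¹
      = hb n m * hb n m * (hc n m * (hb n m)⁻¹) * (hb n m * (hb n m)⁻¹) := by group
    _ = hb n m * (hb n m * hc n m * (hb n m)⁻¹ * hb n m) * (hb n m)⁻¹ := by group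
    _ = hb n m * (hc n m * hb n m * (hb n m)⁻¹ * hb n m) * (hb n m)⁻¹ := by rw [e_cb]
    _ = hb n m * hc n m := by group

lemma e_cbc (n m : ℕ) : hc n m * hb n m * (hc n m)⁻¹ = hb n m := by
  calc hc n m * hb n m * (hc n m)⁻¹ = hb n m * hc n m * (hc n m)⁻¹ := by rw [e_cb]
    _ = hb n m := by group

lemma e_cbcc (n m : ℕ) : hc n m * (hb n m * hc n m) * (hc n m)⁻¹ = hb n m * hc n m := by
  calc hc n m * (hb n m * hc n m) * (hc n m)⁻¹ = hc n m * hb n m := by group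
    _ = hb n m * hc n m := by rw [e_cb]

/-- Conjugation by `a` fixes `b b c`. -/
lemma e_az (n m : ℕ) :
    ha n m * (hb n m * hb n m * hc n m) * (ha n m)⁻¹ = hb n m * hb n m * hc n m := by
  calc ha n m * (hb n m * hb n m * hc n m) * (ha n m)⁻¹
      = (ha n m * hb n m * (ha n m)⁻¹) * (ha n m * hb n m * (ha n m)⁻¹) *
          (ha n m * hc n m * (ha n m)⁻¹) := by group
    _ = (hb n m * hc n m) * (hb n m * hc n m) * (hc n m)⁻¹ := by rw [e_aba, e_ac]
    _ = hb n m * (hc n m * hb n m) := by group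
    _ = hb n m * (hb n m * hc n m) := by rw [e_cb]
    _ = hb n m * hb n m * hc n m := by group

lemma comm_za (n m : ℕ) :
    hb n m * hb n m * hc n m * ha n m = ha n m * (hb n m * hb n m * hc n m) := by
  conv_lhs => rw [← e_az]
  group

lemma comm_zb (n m : ℕ) :
    hb n m * hb n m * hc n m * hb n m = hb n m * (hb n m * hb n m * hc n m) := by
  calc hb n m * hb n m * hc n m * hb n m
      = hb n m * hb n m * (hc n m * hb n m) := by group
    _ = hb n m * hb n m * (hb n m * hc n m) := by rw [e_cb]
    _ = hb n m * (hb n m * hb n m * hc n m) := by group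

lemma comm_zc (n m : ℕ) :
    hb n m * hb n m * hc n m * hc n m = hc n m * (hb n m * hb n m * hc n m) := by
  have h : hc n m * (hb n m * hb n m * hc n m) = hb n m * hb n m * hc n m * hc n m := by
    calc hc n m * (hb n m * hb n m * hc n m)
        = (hc n m * hb n m) * (hb n m * hc n m) := by group
      _ = (hb n m * hc n m) * (hb n m * hc n m) := by rw [e_cb]
      _ = hb n m * (hc n m * hb n m) * hc n m := by group
      _ = hb n m * (hb n m * hc n m) * hc n m := by rw [e_cb]
      _ = hb n m * hb n m * hc n m * hc n m := by group
  exact h.symm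

lemma mem_KS (n m : ℕ) (g : HH n m) : g ∈ KS n m := by
  refine PresentedGroup.generated_by _ (KS n m) ?_ g
  intro j
  fin_cases j
  · exact Or.inr ⟨e_aba n m, e_abc n m⟩
  · exact Or.inl ⟨e_bb n m, e_bbc n m⟩
  · exact Or.inl ⟨e_cbc n m, e_cbcc n m⟩

/-- In `H`, the element `b²c` lies in the center `Z(H)`, and the
conjugacy class of `b` in `H` is exactly `{b, bc}`. -/
theorem statement_13 (n m : ℕ) (hm : 2 < m) (hmn : m < n) :
    hb n m ^ 2 * hc n m ∈ Subgroup.center (HH n m) ∧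
    conjugatesOf (hb n m) = {hb n m, hb n m * hc n m} := by
  constructor
  · -- center
    rw [pow_two, Subgroup.mem_center_iff]
    intro g
    have hg : g ∈ Subgroup.centralizer {hb n m * hb n m * hc n m} := by
      refine PresentedGroup.generated_by _ _ ?_ g
      intro j
      rw [Subgroup.mem_centralizer_iff]
      intro z hz
      rw [Set.mem_singleton_iff] at hz
      subst hz
      fin_cases j
      · exact comm_za n m
      · exact comm_zb n m
      · exact comm_zc n m
    exact ((Subgroup.mem_centralizer_iff.mp hg) _ (Set.mem_singleton _)).symm
  · -- conjugacy class
    ext x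
    have hiff : x ∈ conjugatesOf (hb n m) ↔ IsConj (hb n m) x := Iff.rfl
    rw [hiff, Set.mem_insert_iff, Set.mem_singleton_iff]
    constructor
    · intro hx
      obtain ⟨g, hg⟩ := isConj_iff.mp hx
      rcases mem_KS n m g with ⟨h1, _⟩ | ⟨h1, _⟩
      · left; rw [← hg]; exact h1
      · right; rw [← hg]; exact h1
    · rintro (rfl | rfl)
      · exact IsConj.refl _
      · exact isConj_iff.mpr ⟨ha n m, e_aba n m⟩

end MIP
end
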